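/- Let s = (s_1, \dots, s_n) \in \mathbb{R}_{>0}^n and B \ge 2. Suppose \bar{h} \in \mathbb{N}^n with \bar{h}_1 + \dots + \bar{h}_n = B - 1 satisfies: (1) \bar{h} minimizes \ell(\cdot, s) over \{b \in \mathbb{N}^n : b_1 + \dots + b_n = B - 1\}, and (2) among all such minimizers, \bar{h} minimizes the cardinality of \arg\max_{i \in [n]} \bar{h}_i s_i. Let r \in \arg\min_{i \in [n]} \ell(\bar{h} + e_i, s), where e_i is the i-th standard basis vector. Then h := \bar{h} + e_r minimizes \ell(\cdot, s) over \{b \in \mathbb{N}^n : b_1 + \dots + b_n = B\}. -/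
import Mathlib


/-- The proxy loss `ℓ(a, s) := maxᵢ aᵢ sᵢ` (over a nonempty finite index type). -/
noncomputable def proxyLoss {n : ℕ} (a : Fin n → ℕ) (s : Fin n → ℝ) : ℝ :=
  ⨆ i, (a i : ℝ) * s i

/-- Adding one unit to coordinate `r`: the allocation `a + e_r`. -/
def addUnit {n : ℕ} (a : Fin n → ℕ) (r : Fin n) : Fin n → ℕ :=
  fun j => if j = r then a j + 1 else a j

/-- inductive step of the optimality of `RAS`.
Let `s ∈ ℝ>0ⁿ`, `B ≥ 2`. Suppose `h̄ ∈ ℕⁿ` with `∑ h̄ᵢ = B - 1` (1) minimizes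
`ℓ(·, s)` over allocations of budget `B - 1`, and (2) among all such minimizers,
minimizes the cardinality of `argmaxᵢ h̄ᵢ sᵢ`. Let `r` minimize
`i ↦ ℓ(h̄ + eᵢ, s)`. Then `h := h̄ + e_r` minimizes `ℓ(·, s)` over allocations of
budget `B`. -/
theorem stmt_12 (n B : ℕ) (hn : 1 ≤ n) (hB : 2 ≤ B)
    (s : Fin n → ℝ) (hs : ∀ i, 0 < s i)
    (hbar : Fin n → ℕ) (hsum : ∑ i, hbar i = B - 1)
    (hopt : ∀ b : Fin n → ℕ, (∑ i, b i) = B - 1 → proxyLoss hbar s ≤ proxyLoss b s)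
    (hcard : ∀ b : Fin n → ℕ, (∑ i, b i) = B - 1 → proxyLoss b s = proxyLoss hbar s →
      {i | (hbar i : ℝ) * s i = proxyLoss hbar s}.ncard ≤
        {i | (b i : ℝ) * s i = proxyLoss b s}.ncard)
    (r : Fin n)
    (hr : ∀ i : Fin n, proxyLoss (addUnit hbar r) s ≤ proxyLoss (addUnit hbar i) s) :
    ∀ b : Fin n → ℕ, (∑ i, b i) = B → proxyLoss (addUnit hbar r) s ≤ proxyLoss b s := by
  intro b hsumb
  haveI : Nonempty (Fin n) := ⟨⟨0, hn⟩⟩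
  have hbdd : ∀ a : Fin n → ℕ, BddAbove (Set.range fun i => (a i : ℝ) * s i) :=
    fun a => (Set.finite_range _).bddAbove
  have hle : ∀ (a : Fin n → ℕ) (i : Fin n), (a i : ℝ) * s i ≤ proxyLoss a s :=
    fun a i => le_ciSup (hbdd a) i
  -- pigeonhole: some coordinate of b exceeds hbar
  have hj : ∃ j, hbar j < b j := by
    by_contra h
    push_neg at h
    have : ∑ i, b i ≤ ∑ i, hbar i := Finset.sum_le_sum fun i _ => h i
    omega
  obtain ⟨j, hj⟩ := hj
  -- b' = b with one unit removed at j
  set b' : Fin n → ℕ := Function.update b j (b j - 1) with hb'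
  have hsum' : ∑ i, b' i = B - 1 := by
    have h1 : ∑ i, b' i = (b j - 1) + ∑ i ∈ Finset.univ.erase j, b i := by
      rw [hb', Finset.sum_update_of_mem (Finset.mem_univ j), ← Finset.erase_eq]
    have h2 : b j + ∑ i ∈ Finset.univ.erase j, b i = ∑ i, b i :=
      Finset.add_sum_erase _ _ (Finset.mem_univ j)
    omega
  have hb'le : ∀ i, b' i ≤ b i := by
    intro i
    by_cases hij : i = j
    · subst hij; simp [hb']
    · simp [hb', Function.update_of_ne hij]
  have hmono : proxyLoss b' s ≤ proxyLoss b s :=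
    ciSup_le fun i =>
      le_trans (mul_le_mul_of_nonneg_right (Nat.cast_le.2 (hb'le i)) (hs i).le) (hle b i)
  have hL : proxyLoss hbar s ≤ proxyLoss b s := le_trans (hopt b' hsum') hmono
  calc proxyLoss (addUnit hbar r) s ≤ proxyLoss (addUnit hbar j) s := hr j
    _ ≤ proxyLoss b s := by
        apply ciSup_le
        intro i
        by_cases hij : i = j
        · subst hij
          have h1 : ((addUnit hbar i i : ℕ) : ℝ) * s i ≤ (b i : ℝ) * s i := by
            apply mul_le_mul_of_nonneg_right _ (hs i).le
            exact_mod_cast by simp [addUnit]; omega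
          exact le_trans h1 (hle b i)
        · have h1 : ((addUnit hbar j i : ℕ) : ℝ) * s i ≤ proxyLoss hbar s := by
            simpa [addUnit, hij] using hle hbar i
          exact le_trans h1 hL
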